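/- arXiv:2007.15418 — 2 statements merged into one kernel-verified Lean document; each statement's English description precedes it below -/
import Mathlib

section
/- (Recursion identity for the MomentumQ tabular algorithm.) Let Q_0 be given, Q_1 = 𝒟_0[Q_0, Q_{-1}] (where by convention Q_{-1}=Q_0 and 𝒟_0 reduces to the empirical Bellman update), and for k ≥ 1 define Q_{k+1} = (1 − a_k)Q_k + [b_k(1−a_k)+c_k](Q_k − Q_{k-1}) + a_k 𝒟_k[Q_k, Q_{k-1}] with a_k = 1/(k+1), b_k = k−m−1, c_k = (−k² + (m+1)k + 1)/(k+1), where 𝒟_k[Q_k,Q_{k-1}] = (1+b_k)𝒯Q_k − b_k 𝒯Q_{k-1} − ε_k for an operator 𝒯 and error terms ε_k, and E_k = ∑_{j=0}^k ε_j. Then for all k ≥ 1, Q_k = (1/k)(Q_{k-1} − Q_0 + (k−m−1)𝒯Q_{k-1}) + (1/k)((m+1)𝒯Q_0 − E_{k-1}). -/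
/-! With the prescribed learning rates the momentum recursion collapses to
`(k+1) Q_{k+1} - Q_k - (k-m) 𝒯Q_k = k Q_k - Q_{k-1} - (k-m-1) 𝒯Q_{k-1} - ε_k`,
so the residual `k Q_k - Q_{k-1} - (k-m-1) 𝒯Q_{k-1}` telescopes: it loses `ε_k` at every step,
and at `k = 1` it equals `(m+1) 𝒯Q_0 - Q_0 - ε_0`. Solving for `Q_k` gives the identity. -/

open Finset

theorem eq_sub_sum_range_of_succ_eq_sub {V : Type*} [AddCommGroup V] {R ε : ℕ → V} {C : V}
    (h₁ : R 1 = C - ε 0) (hsucc : ∀ k, 1 ≤ k → R (k + 1) = R k - ε k) :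
    ∀ k, 1 ≤ k → R k = C - ∑ j ∈ range k, ε j := by
  intro k hk
  induction k, hk using Nat.le_induction with
  | base => simpa using h₁
  | succ k hk ih => rw [hsucc k hk, ih, sum_range_succ, sub_add_eq_sub_sub]

section Momentum

variable {V : Type*} [AddCommGroup V] [Module ℝ V] (Q : ℕ → V) (T : V → V) (m : ℝ)

def momentumResidual (k : ℕ) : V :=
  (k : ℝ) • Q k - Q (k - 1) - ((k : ℝ) - m - 1) • T (Q (k - 1))

theorem momentumResidual_one {ε : ℕ → V} (hQ1 : Q 1 = T (Q 0) - ε 0) :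
    momentumResidual Q T m 1 = ((m + 1) • T (Q 0) - Q 0) - ε 0 := by
  simp only [momentumResidual, Nat.cast_one, one_smul, Nat.sub_self, hQ1]
  module

theorem momentumResidual_succ {ε : ℕ → V} {a b c : ℕ → ℝ}
    (ha : ∀ k, a k = 1 / ((k : ℝ) + 1))
    (hb : ∀ k, b k = (k : ℝ) - m - 1)
    (hc : ∀ k, c k = (-(k : ℝ) ^ 2 + (m + 1) * k + 1) / ((k : ℝ) + 1))
    {k : ℕ} (hk : 1 ≤ k)
    (hrec : Q (k + 1) = (1 - a k) • Q k + (b k * (1 - a k) + c k) • (Q k - Q (k - 1)) +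
        a k • ((1 + b k) • T (Q k) - b k • T (Q (k - 1)) - ε k)) :
    momentumResidual Q T m (k + 1) = momentumResidual Q T m k - ε k := by
  have hk1 : (k : ℝ) + 1 ≠ 0 := by positivity
  simp only [momentumResidual, Nat.add_sub_cancel, Nat.cast_add, Nat.cast_one, hrec, ha, hb, hc]
  match_scalars <;> field_simp <;> ring

end Momentum

theorem stmt_13 (V : Type*) [AddCommGroup V] [Module ℝ V]
    (Q : ℕ → V) (T : V → V) (ε : ℕ → V) (m : ℝ)
    (a b c : ℕ → ℝ)
    (ha : ∀ k, a k = 1 / ((k : ℝ) + 1))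
    (hb : ∀ k, b k = (k : ℝ) - m - 1)
    (hc : ∀ k, c k = (-(k : ℝ) ^ 2 + (m + 1) * k + 1) / ((k : ℝ) + 1))
    (hQ1 : Q 1 = T (Q 0) - ε 0)
    (hrec : ∀ k : ℕ, 1 ≤ k →
      Q (k + 1) = (1 - a k) • Q k + (b k * (1 - a k) + c k) • (Q k - Q (k - 1)) +
        a k • ((1 + b k) • T (Q k) - b k • T (Q (k - 1)) - ε k)) :
    ∀ k : ℕ, 1 ≤ k →
      Q k = ((k : ℝ))⁻¹ • (Q (k - 1) - Q 0 + ((k : ℝ) - m - 1) • T (Q (k - 1)) +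
        (m + 1) • T (Q 0) - ∑ j ∈ Finset.range k, ε j) := by
  intro k hk
  have hresidual := eq_sub_sum_range_of_succ_eq_sub (momentumResidual_one Q T m hQ1)
    (fun j hj => momentumResidual_succ Q T m ha hb hc hj (hrec j hj)) k hk
  have hk0 : (k : ℝ) ≠ 0 := Nat.cast_ne_zero.mpr (by omega)
  rw [momentumResidual] at hresidual
  rw [eq_inv_smul_iff₀ hk0]
  linear_combination (norm := module) hresidual
end

section
/- (Boundedness of the empirical Bellman combination.) With b_k = k − m − 1 and a_{k-1} = 1/k, and under ‖Q_k‖ ≤ V_max for all k, ‖R‖ ≤ R_max, γ ∈ (0,1), the quantities D_k := (1+b_k)𝒯̂_k Q_k − b_k 𝒯̂_k Q_{k-1}, where 𝒯̂_k Q = R + γ·(max over actions of Q at a sampled next state), satisfy the recursive bound ‖D_k‖ ≤ R_max + 2γ V_max + γ‖D_{k-1}‖ for all k ≥ m/2, and hence sup_k ‖D_k‖ < ∞. -/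
/-!
Writing `s = k - m`, the combination is `D_k = 𝒯̂_k Q_{k-1} + s • (𝒯̂_k Q_k - 𝒯̂_k Q_{k-1})`.
The first term is at most `R_max + γ V_max`. The empirical Bellman operator is `γ`-Lipschitz in
the sup norm, and the recursion for `Q` gives `k ‖Q_k - Q_{k-1}‖ ≤ ‖D_{k-1}‖ + V_max`; since
`|s| ≤ k` once `k ≥ m / 2`, the second term is at most `γ (‖D_{k-1}‖ + V_max)`. A sequence
obeying `u_{n+1} ≤ B + γ u_n` with `γ < 1` from some index on is bounded.
-/

open Finset

lemma norm_smul_sub_sub_one_smul_le {E : Type*} [SeminormedAddCommGroup E] [NormedSpace ℝ E]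
    (s : ℝ) (a b : E) : ‖s • a - (s - 1) • b‖ ≤ ‖b‖ + |s| * ‖a - b‖ := by
  have h : s • a - (s - 1) • b = b + s • (a - b) := by module
  rw [h, ← Real.norm_eq_abs, ← norm_smul]
  exact norm_add_le _ _

lemma exists_forall_le_of_le_add_mul {u : ℕ → ℝ} {B γ : ℝ} (N : ℕ) (hγ0 : 0 ≤ γ) (hγ1 : γ < 1)
    (h : ∀ n, N ≤ n → u (n + 1) ≤ B + γ * u n) : ∃ C, ∀ n, u n ≤ C := by
  obtain ⟨C₀, hC₀⟩ := ((Set.finite_Iic N).image u).bddAbove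
  set C := max C₀ (B / (1 - γ))
  have hB : B ≤ (1 - γ) * C := (div_le_iff₀' (by linarith)).1 (le_max_right _ _)
  refine ⟨C, fun n => ?_⟩
  induction n with
  | zero => exact (hC₀ ⟨0, Nat.zero_le N, rfl⟩).trans (le_max_left _ _)
  | succ n ih =>
    rcases le_or_gt (n + 1) N with hn | hn
    · exact (hC₀ ⟨n + 1, hn, rfl⟩).trans (le_max_left _ _)
    · calc u (n + 1) ≤ B + γ * u n := h n (by omega)
        _ ≤ B + γ * C := by gcongr
        _ ≤ C := by linarith

section SupNorm

variable {ι : Type*} [Fintype ι] [Nonempty ι]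

lemma sup'_le_sup'_add_norm_sub (f g : ι → ℝ) :
    univ.sup' univ_nonempty f ≤ univ.sup' univ_nonempty g + ‖f - g‖ :=
  sup'_le _ _ fun i _ => by
    have hfg : f i - g i ≤ ‖f - g‖ := (le_abs_self _).trans (norm_le_pi_norm (f - g) i)
    have hg := le_sup' g (mem_univ i)
    linarith

lemma abs_sup'_sub_sup'_le_norm_sub (f g : ι → ℝ) :
    |univ.sup' univ_nonempty f - univ.sup' univ_nonempty g| ≤ ‖f - g‖ := by
  have hfg := sup'_le_sup'_add_norm_sub f g
  have hgf := sup'_le_sup'_add_norm_sub g f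
  rw [norm_sub_rev] at hgf
  exact abs_sub_le_iff.2 ⟨by linarith, by linarith⟩

lemma abs_sup'_le_norm (f : ι → ℝ) : |univ.sup' univ_nonempty f| ≤ ‖f‖ := by
  simpa using abs_sup'_sub_sup'_le_norm_sub f 0

end SupNorm

section EmpiricalBellman

variable {X U : Type*} [Fintype X] [Fintype U] [Nonempty U]
  {R : X → U → ℝ} {γ : ℝ} {next : X → U → X}

/-- The paper's `𝒯̂_k` is `empiricalBellman R γ (y k)`, with `next x u` the sampled next state. -/
noncomputable def empiricalBellman (R : X → U → ℝ) (γ : ℝ) (next : X → U → X)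
    (Q : X → U → ℝ) : X → U → ℝ :=
  fun x u => R x u + γ * univ.sup' univ_nonempty (Q (next x u))

lemma norm_empiricalBellman_le (hγ : 0 ≤ γ) (Q : X → U → ℝ) :
    ‖empiricalBellman R γ next Q‖ ≤ ‖R‖ + γ * ‖Q‖ := by
  refine (pi_norm_le_iff_of_nonneg (by positivity)).2 fun x =>
    (pi_norm_le_iff_of_nonneg (by positivity)).2 fun u => ?_
  calc ‖R x u + γ * univ.sup' univ_nonempty (Q (next x u))‖
      ≤ ‖R x u‖ + γ * |univ.sup' univ_nonempty (Q (next x u))| :=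
        (norm_add_le _ _).trans_eq (by rw [norm_mul, Real.norm_of_nonneg hγ, Real.norm_eq_abs, Real.norm_eq_abs])
    _ ≤ ‖R‖ + γ * ‖Q‖ := by
        gcongr
        · exact (norm_le_pi_norm (R x) u).trans (norm_le_pi_norm R x)
        · exact (abs_sup'_le_norm _).trans (norm_le_pi_norm Q _)

lemma norm_empiricalBellman_sub_le (hγ : 0 ≤ γ) (Q Q' : X → U → ℝ) :
    ‖empiricalBellman R γ next Q - empiricalBellman R γ next Q'‖ ≤ γ * ‖Q - Q'‖ := by
  refine (pi_norm_le_iff_of_nonneg (by positivity)).2 fun x =>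
    (pi_norm_le_iff_of_nonneg (by positivity)).2 fun u => ?_
  have hdiff : (empiricalBellman R γ next Q - empiricalBellman R γ next Q') x u =
      γ * (univ.sup' univ_nonempty (Q (next x u)) - univ.sup' univ_nonempty (Q' (next x u))) := by
    simp only [empiricalBellman, Pi.sub_apply]
    ring
  rw [hdiff, Real.norm_eq_abs, abs_mul, abs_of_nonneg hγ]
  gcongr
  exact (abs_sup'_sub_sup'_le_norm_sub _ _).trans (norm_le_pi_norm (Q - Q') (next x u))

end EmpiricalBellman

theorem stmt_15_general (X U : Type*) [Fintype X] [Fintype U] [Nonempty U]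
    (Q : ℕ → (X → U → ℝ)) (R : X → U → ℝ) (y : ℕ → X → U → X)
    (γ m Vmax Rmax : ℝ) (hγ : γ ∈ Set.Ioo (0:ℝ) 1) (hm : 1 / γ ≤ m)
    (hQbd : ∀ k, ‖Q k‖ ≤ Vmax) (hRbd : ‖R‖ ≤ Rmax)
    (That : ℕ → (X → U → ℝ) → (X → U → ℝ))
    (hThat : ∀ k Q', That k Q' = fun x u =>
      R x u + γ * (Finset.univ.sup' Finset.univ_nonempty (fun u' => Q' (y k x u) u')))
    (D : ℕ → (X → U → ℝ))
    (hD : ∀ k, D k = ((k : ℝ) - m) • That k (Q k) - ((k : ℝ) - m - 1) • That k (Q (k - 1)))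
    (hrec : ∀ k : ℕ, 1 ≤ k →
      Q k = Q (k - 1) - ((k : ℝ))⁻¹ • Q (k - 2) + ((k : ℝ))⁻¹ • D (k - 1)) :
    (∀ k : ℕ, 1 ≤ k → m / 2 ≤ (k : ℝ) →
      ‖D k‖ ≤ Rmax + 2 * γ * Vmax + γ * ‖D (k - 1)‖) ∧
      ∃ C : ℝ, ∀ k, ‖D k‖ ≤ C := by
  obtain ⟨hγ0, hγ1⟩ := hγ
  have hm0 : 0 ≤ m := le_trans (by positivity) hm
  have hT : ∀ k, That k = empiricalBellman R γ (y k) := fun k => funext (hThat k)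
  have hstep : ∀ k : ℕ, 1 ≤ k → m / 2 ≤ (k : ℝ) →
      ‖D k‖ ≤ Rmax + 2 * γ * Vmax + γ * ‖D (k - 1)‖ := by
    intro k hk hkm
    have hk0 : (0 : ℝ) < k := by exact_mod_cast hk
    have hincr : (k : ℝ) * ‖Q k - Q (k - 1)‖ ≤ ‖D (k - 1)‖ + Vmax := by
      have h : Q k - Q (k - 1) = (k : ℝ)⁻¹ • (D (k - 1) - Q (k - 2)) := by
        rw [hrec k hk, smul_sub]; abel
      rw [h, norm_smul, Real.norm_eq_abs, abs_of_pos (inv_pos.2 hk0), ← mul_assoc,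
        mul_inv_cancel₀ hk0.ne', one_mul]
      exact (norm_sub_le _ _).trans (by linarith [hQbd (k - 2)])
    have hcoef : |(k : ℝ) - m| ≤ k := abs_le.2 ⟨by linarith, by linarith⟩
    calc ‖D k‖ ≤ ‖That k (Q (k - 1))‖ + |(k : ℝ) - m| * ‖That k (Q k) - That k (Q (k - 1))‖ := by
          rw [hD k]; exact norm_smul_sub_sub_one_smul_le _ _ _
      _ ≤ (Rmax + γ * Vmax) + k * (γ * ‖Q k - Q (k - 1)‖) := by
          rw [hT]
          gcongr
          · exact (norm_empiricalBellman_le hγ0.le _).trans (by gcongr; exact hQbd _)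
          · exact norm_empiricalBellman_sub_le hγ0.le _ _
      _ ≤ Rmax + 2 * γ * Vmax + γ * ‖D (k - 1)‖ := by
          linarith [mul_le_mul_of_nonneg_left hincr hγ0.le]
  refine ⟨hstep, exists_forall_le_of_le_add_mul (B := Rmax + 2 * γ * Vmax) ⌈m / 2⌉₊ hγ0.le hγ1 fun n hn => ?_⟩
  have hn' : m / 2 ≤ ((n + 1 : ℕ) : ℝ) :=
    (Nat.le_ceil _).trans (by exact_mod_cast hn.trans n.le_succ)
  simpa using hstep (n + 1) (by omega) hn'

theorem stmt_15 (X U : Type*) [Fintype X] [Fintype U] [Nonempty X] [Nonempty U]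
    (Q : ℕ → (X → U → ℝ)) (R : X → U → ℝ) (y : ℕ → X → U → X)
    (γ m Vmax Rmax : ℝ) (hγ : γ ∈ Set.Ioo (0:ℝ) 1) (hm : 1 / γ ≤ m)
    (hQbd : ∀ k, ‖Q k‖ ≤ Vmax) (hRbd : ‖R‖ ≤ Rmax)
    (That : ℕ → (X → U → ℝ) → (X → U → ℝ))
    (hThat : ∀ k Q', That k Q' = fun x u =>
      R x u + γ * (Finset.univ.sup' Finset.univ_nonempty (fun u' => Q' (y k x u) u')))
    (D : ℕ → (X → U → ℝ))
    (hD : ∀ k, D k = ((k : ℝ) - m) • That k (Q k) - ((k : ℝ) - m - 1) • That k (Q (k - 1)))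
    (hrec : ∀ k : ℕ, 1 ≤ k →
      Q k = Q (k - 1) - ((k : ℝ))⁻¹ • Q (k - 2) + ((k : ℝ))⁻¹ • D (k - 1)) :
    (∀ k : ℕ, 1 ≤ k → m / 2 ≤ (k : ℝ) →
      ‖D k‖ ≤ Rmax + 2 * γ * Vmax + γ * ‖D (k - 1)‖) ∧
      ∃ C : ℝ, ∀ k, ‖D k‖ ≤ C :=
  stmt_15_general X U Q R y γ m Vmax Rmax hγ hm hQbd hRbd That hThat D hD hrec
end
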